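/- Let ℝ^{4,2} = D₁ ⊕⊥ D₂ be a Dupin cyclide and σ_a a Lie inversion (⟨a,a⟩ ≠ 0). Let s₁ ∈ D₁ and s₂ ∈ D₂ be nonzero isotropic vectors (spanning a contact element f = span{s₁,s₂} of the cyclide) with (⟨s₁,a⟩, ⟨s₂,a⟩) ≠ (0,0). Then r := ⟨s₂,a⟩s₁ − ⟨s₁,a⟩s₂ is a nonzero isotropic vector with ⟨r,a⟩ = 0 and σ_a(r) = r, and r lies in both contact elements span{s₁,s₂} and σ_a(span{s₁,s₂}) = span{σ_a(s₁), σ_a(s₂)}. Hence the Dupin cyclides D₁ ⊕⊥ D₂ and σ_a(D₁) ⊕⊥ σ_a(D₂) envelop the common sphere congruence given in each contact element f by f ∩ a^⊥, i.e. two Dupin cyclides related by a fixed Lie inversion form a Ribaucour pair. -/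

import Mathlib

/-
The form on `ℝ^{4,2}` is nondegenerate, so the orthogonal summands `D₁`, `D₂` of a cyclide
meet only in `0`, and `r`, a nontrivial combination of `s₁ ∈ D₁` and `s₂ ∈ D₂`, is nonzero.
It is isotropic because the contact element `span{s₁, s₂}` is totally isotropic, and
`⟨r, a⟩ = 0` by construction, so `σ_a` fixes `r`. Since `σ_a` is linear,
`r = σ_a r = ⟨s₂,a⟩ σ_a s₁ - ⟨s₁,a⟩ σ_a s₂` lies in the image contact element as well.
-/

noncomputable section

/-- The symmetric bilinear form of signature (4,2) on ℝ⁶, modelling ℝ^{4,2}. -/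
def B (x y : Fin 6 → ℝ) : ℝ :=
  x 0 * y 0 + x 1 * y 1 + x 2 * y 2 + x 3 * y 3 - x 4 * y 4 - x 5 * y 5

/-- The Lie inversion with respect to the linear sphere complex `a`. -/
def lieInv (a x : Fin 6 → ℝ) : Fin 6 → ℝ :=
  x - (2 * B x a / B a a) • a

/-- The induced form on the subspace `W` has signature (2,1) (it admits a
spanning pseudo-orthonormal triple of Gram matrix diag(1,1,-1)); in particular
`W` is 3-dimensional. -/
def SigTwoOne (W : Submodule ℝ (Fin 6 → ℝ)) : Prop :=
  ∃ u v w : Fin 6 → ℝ, Submodule.span ℝ ({u, v, w} : Set (Fin 6 → ℝ)) = W ∧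
    B u u = 1 ∧ B v v = 1 ∧ B w w = -1 ∧ B u v = 0 ∧ B u w = 0 ∧ B v w = 0

lemma B_comm (x y : Fin 6 → ℝ) : B x y = B y x := by
  simp only [B]; ring

lemma B_add_right (x y z : Fin 6 → ℝ) : B x (y + z) = B x y + B x z := by
  simp only [B, Pi.add_apply]; ring

lemma B_smul_sub_smul_left (x y z : Fin 6 → ℝ) (c d : ℝ) :
    B (c • x - d • y) z = c * B x z - d * B y z := by
  simp only [B, Pi.sub_apply, Pi.smul_apply, smul_eq_mul]; ring

lemma B_smul_sub_smul_right (x y z : Fin 6 → ℝ) (c d : ℝ) :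
    B z (c • x - d • y) = c * B z x - d * B z y := by
  simp only [B, Pi.sub_apply, Pi.smul_apply, smul_eq_mul]; ring

lemma eq_zero_of_forall_B_eq_zero {x : Fin 6 → ℝ} (h : ∀ y, B x y = 0) : x = 0 := by
  funext i
  have hi := h (Pi.single i 1)
  fin_cases i <;> simpa [B] using hi

lemma B_smul_sub_smul_self {x y : Fin 6 → ℝ} (hx : B x x = 0) (hy : B y y = 0)
    (hxy : B x y = 0) (c d : ℝ) : B (c • x - d • y) (c • x - d • y) = 0 := by
  rw [B_smul_sub_smul_left, B_smul_sub_smul_right, B_smul_sub_smul_right, hx, hy, hxy,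
    B_comm y x, hxy]
  ring

lemma disjoint_of_B_orthogonal {D₁ D₂ : Submodule ℝ (Fin 6 → ℝ)}
    (horth : ∀ x ∈ D₁, ∀ y ∈ D₂, B x y = 0) (hspan : D₁ ⊔ D₂ = ⊤) : Disjoint D₁ D₂ := by
  refine Submodule.disjoint_def.mpr fun v hv₁ hv₂ => eq_zero_of_forall_B_eq_zero fun w => ?_
  obtain ⟨y, hy, z, hz, rfl⟩ := Submodule.mem_sup.mp (hspan ▸ Submodule.mem_top : w ∈ D₁ ⊔ D₂)
  rw [B_add_right, B_comm, horth y hy v hv₂, horth v hv₁ z hz, add_zero]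

lemma smul_sub_smul_ne_zero_of_disjoint {K V : Type*} [Field K] [AddCommGroup V] [Module K V]
    {D₁ D₂ : Submodule K V} (hD : Disjoint D₁ D₂) {x y : V} (hx : x ∈ D₁) (hy : y ∈ D₂)
    (hx₀ : x ≠ 0) (hy₀ : y ≠ 0) {c d : K} (hcd : ¬(c = 0 ∧ d = 0)) : c • x - d • y ≠ 0 := by
  intro h
  have hxy : c • x = d • y := sub_eq_zero.mp h
  have hcx : c • x = 0 :=
    Submodule.disjoint_def.mp hD _ (D₁.smul_mem c hx) (hxy ▸ D₂.smul_mem d hy)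
  have hc : c = 0 := (smul_eq_zero.mp hcx).resolve_right hx₀
  have hd : d = 0 := (smul_eq_zero.mp (hxy ▸ hcx)).resolve_right hy₀
  exact hcd ⟨hc, hd⟩

lemma lieInv_eq_self {a x : Fin 6 → ℝ} (hx : B x a = 0) : lieInv a x = x := by
  simp [lieInv, hx]

lemma lieInv_smul_sub_smul (a x y : Fin 6 → ℝ) (c d : ℝ) :
    lieInv a (c • x - d • y) = c • lieInv a x - d • lieInv a y := by
  funext i
  simp only [lieInv, B_smul_sub_smul_left, Pi.sub_apply, Pi.smul_apply, smul_eq_mul]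
  ring

lemma smul_sub_smul_mem_span_pair (x y : Fin 6 → ℝ) (c d : ℝ) :
    c • x - d • y ∈ Submodule.span ℝ ({x, y} : Set (Fin 6 → ℝ)) :=
  Submodule.sub_mem _ (Submodule.smul_mem _ _ (Submodule.subset_span (by simp)))
    (Submodule.smul_mem _ _ (Submodule.subset_span (by simp)))

theorem stmt_14_general (D₁ D₂ : Submodule ℝ (Fin 6 → ℝ))
    (horth : ∀ x ∈ D₁, ∀ y ∈ D₂, B x y = 0) (hspan : D₁ ⊔ D₂ = ⊤)
    (a s₁ s₂ : Fin 6 → ℝ)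
    (hs₁D : s₁ ∈ D₁) (hs₂D : s₂ ∈ D₂) (hs₁ : s₁ ≠ 0) (hs₂ : s₂ ≠ 0)
    (is₁ : B s₁ s₁ = 0) (is₂ : B s₂ s₂ = 0)
    (hna : ¬(B s₁ a = 0 ∧ B s₂ a = 0))
    (r : Fin 6 → ℝ) (hr : r = B s₂ a • s₁ - B s₁ a • s₂) :
    r ≠ 0 ∧ B r r = 0 ∧ B r a = 0 ∧ lieInv a r = r ∧
    r ∈ Submodule.span ℝ ({s₁, s₂} : Set (Fin 6 → ℝ)) ∧
    r ∈ Submodule.span ℝ ({lieInv a s₁, lieInv a s₂} : Set (Fin 6 → ℝ)) := by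
  have hra : B r a = 0 := by rw [hr, B_smul_sub_smul_left]; ring
  have hfix : lieInv a r = r := lieInv_eq_self hra
  refine ⟨?_, ?_, hra, hfix, hr ▸ smul_sub_smul_mem_span_pair _ _ _ _, ?_⟩
  · exact hr ▸ smul_sub_smul_ne_zero_of_disjoint (disjoint_of_B_orthogonal horth hspan)
      hs₁D hs₂D hs₁ hs₂ fun h => hna ⟨h.2, h.1⟩
  · exact hr ▸ B_smul_sub_smul_self is₁ is₂ (horth _ hs₁D _ hs₂D) _ _
  · rw [← hfix, hr, lieInv_smul_sub_smul]
    exact smul_sub_smul_mem_span_pair _ _ _ _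

/-- Two Dupin cyclides related by a fixed Lie inversion form
a Ribaucour pair: in each contact element `span{s₁,s₂}` of the cyclide
`D₁ ⊕⊥ D₂` the sphere `r = ⟨s₂,a⟩s₁ - ⟨s₁,a⟩s₂` is a nonzero isotropic
vector orthogonal to `a`, fixed by `σ_a`, and common to the contact elements
`span{s₁,s₂}` and `σ_a(span{s₁,s₂}) = span{σ_a(s₁), σ_a(s₂)}` — the enveloped
Ribaucour sphere congruence. -/
theorem stmt_14 (D₁ D₂ : Submodule ℝ (Fin 6 → ℝ))
    (hsig₁ : SigTwoOne D₁) (hsig₂ : SigTwoOne D₂)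
    (horth : ∀ x ∈ D₁, ∀ y ∈ D₂, B x y = 0) (hspan : D₁ ⊔ D₂ = ⊤)
    (a s₁ s₂ : Fin 6 → ℝ) (ha : B a a ≠ 0)
    (hs₁D : s₁ ∈ D₁) (hs₂D : s₂ ∈ D₂) (hs₁ : s₁ ≠ 0) (hs₂ : s₂ ≠ 0)
    (is₁ : B s₁ s₁ = 0) (is₂ : B s₂ s₂ = 0)
    (hna : ¬(B s₁ a = 0 ∧ B s₂ a = 0))
    (r : Fin 6 → ℝ) (hr : r = B s₂ a • s₁ - B s₁ a • s₂) :
    r ≠ 0 ∧ B r r = 0 ∧ B r a = 0 ∧ lieInv a r = r ∧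
    r ∈ Submodule.span ℝ ({s₁, s₂} : Set (Fin 6 → ℝ)) ∧
    r ∈ Submodule.span ℝ ({lieInv a s₁, lieInv a s₂} : Set (Fin 6 → ℝ)) :=
  stmt_14_general D₁ D₂ horth hspan a s₁ s₂ hs₁D hs₂D hs₁ hs₂ is₁ is₂ hna r hr
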